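/- arXiv:2208.12629 — 3 statements merged into one kernel-verified Lean document; each statement's English description precedes it below -/
import Mathlib

section
/- Let m ≥ 1 be a natural number and θ ∈ ℝ. The second derivative at z = 0 of the θ-method stability function φ_θ(z) = (1 + θmz)/(1 − (1−θ)mz) equals 2(1−θ)m², and consequently φ_θ″(0) equals the second derivative m(m−1) of the m-step forward Euler stability function φ_m(z) = (1+z)^m at z = 0 if and only if θ = (m+1)/(2m). In particular θ_m = (m+1)/(2m) is the unique value of θ for which φ_θ approximates φ_m to second order at 0. -/
/-!
Writing `φ_θ(z) = (1 + a z)/(1 - b z)` with `a = θm`, `b = (1-θ)m`, one gets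
`φ_θ'' = 2b(a+b)/(1 - bz)³`, which is `2(1-θ)m²` at `0` since `a + b = m`. As
`2(1-θ)m² - m(m-1) = m(m + 1 - 2θm)` and `m ≠ 0`, the two second derivatives agree exactly
when `2θm = m + 1`.
-/

open Filter Topology

section

variable {𝕜 : Type*} [NontriviallyNormedField 𝕜]

theorem deriv_deriv_one_add_pow (m : ℕ) (x : 𝕜) :
    deriv (deriv fun z : 𝕜 => (1 + z) ^ m) x = m * (m - 1) * (1 + x) ^ (m - 2) := by
  have shift : ∀ g : 𝕜 → 𝕜, deriv (fun z => g (1 + z)) = fun z => deriv g (1 + z) :=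
    fun g => funext (deriv_comp_const_add g 1)
  rw [shift (· ^ m), shift (deriv (· ^ m))]
  have h := iter_deriv_pow m (1 + x) 2
  simp only [Function.iterate_succ, Function.iterate_zero, Function.comp_apply, id] at h
  simpa [Finset.prod_range_succ] using h

theorem hasDerivAt_one_add_mul_div_one_sub_mul (a b x : 𝕜) (hx : 1 - b * x ≠ 0) :
    HasDerivAt (fun z => (1 + a * z) / (1 - b * z)) ((a + b) / (1 - b * x) ^ 2) x := by
  have num : HasDerivAt (fun z => 1 + a * z) a x := by
    simpa using ((hasDerivAt_id x).const_mul a).const_add 1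
  have den : HasDerivAt (fun z => 1 - b * z) (-b) x := by
    simpa using ((hasDerivAt_id x).const_mul b).const_sub 1
  exact (num.fun_div den hx).congr_deriv (by ring)

theorem deriv_deriv_one_add_mul_div_one_sub_mul (a b x : 𝕜) (hx : 1 - b * x ≠ 0) :
    deriv (deriv fun z => (1 + a * z) / (1 - b * z)) x = 2 * b * (a + b) / (1 - b * x) ^ 3 := by
  have den : ∀ y, HasDerivAt (fun z => 1 - b * z) (-b) y := fun y => by
    simpa using ((hasDerivAt_id y).const_mul b).const_sub 1
  have first : deriv (fun z => (1 + a * z) / (1 - b * z)) =ᶠ[𝓝 x]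
      fun z => (a + b) / (1 - b * z) ^ 2 := by
    filter_upwards [(den x).continuousAt.eventually_ne hx] with y hy
    exact (hasDerivAt_one_add_mul_div_one_sub_mul a b y hy).deriv
  rw [first.deriv_eq,
    ((hasDerivAt_const x (a + b)).fun_div ((den x).fun_pow 2) (pow_ne_zero 2 hx)).deriv]
  field_simp
  ring

end

/-- The second derivative at `0` of the θ-method stability function
`φ_θ(z) = (1 + θmz)/(1 − (1−θ)mz)` equals `2(1−θ)m²`; the second derivative at `0`
of the `m`-step forward Euler stability function `φ_m(z) = (1+z)^m` equals `m(m−1)`;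
and the two agree if and only if `θ = (m+1)/(2m)`. -/
theorem theta_method_second_derivative (m : ℕ) (hm : 1 ≤ m) (θ : ℝ) :
    deriv (deriv (fun z : ℝ => (1 + θ * m * z) / (1 - (1 - θ) * m * z))) 0
      = 2 * (1 - θ) * (m : ℝ) ^ 2 ∧
    deriv (deriv (fun z : ℝ => (1 + z) ^ m)) 0 = (m : ℝ) * ((m : ℝ) - 1) ∧
    (deriv (deriv (fun z : ℝ => (1 + θ * m * z) / (1 - (1 - θ) * m * z))) 0
        = deriv (deriv (fun z : ℝ => (1 + z) ^ m)) 0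
      ↔ θ = ((m : ℝ) + 1) / (2 * m)) := by
  have theta : deriv (deriv fun z : ℝ => (1 + θ * m * z) / (1 - (1 - θ) * m * z)) 0
      = 2 * (1 - θ) * (m : ℝ) ^ 2 := by
    rw [deriv_deriv_one_add_mul_div_one_sub_mul _ _ 0 (by simp)]
    ring
  have euler : deriv (deriv fun z : ℝ => (1 + z) ^ m) 0 = (m : ℝ) * ((m : ℝ) - 1) := by
    simpa using deriv_deriv_one_add_pow m (0 : ℝ)
  have hm0 : (m : ℝ) ≠ 0 := Nat.cast_ne_zero.2 (by omega)
  refine ⟨theta, euler, ?_⟩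
  rw [theta, euler, eq_div_iff (mul_ne_zero two_ne_zero hm0)]
  constructor
  · intro h
    exact mul_left_cancel₀ hm0 (by linear_combination -h)
  · intro h
    linear_combination -(m : ℝ) * h
end

section
/- Let m ≥ 1 be a natural number and set θ = (m+1)/(2m). Then the polynomial identity (1 − (1−θ)mz)·(1+z)^m − (1 + θmz) in the variable z has vanishing coefficients in degrees 0, 1, and 2; equivalently, (1 − (1−θ)mz)(1+z)^m − (1 + θmz) is divisible by z³ in ℝ[z]. Hence the θ-method with θ = (m+1)/(2m) approximates m steps of forward Euler to second order. -/
/-!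
The coefficient of `z^(k+1)` in `(1 - a z)(1+z)^m - (1 + b z)` is `C(m,k+1) - a C(m,k) - [k = 0] b`,
so divisibility by `z³` amounts to the two order conditions `a + b = m` and `a m = C(m,2)`.
For `a = (1-θ)m`, `b = θm` the first holds for every `θ`, and `θ = (m+1)/(2m)` is exactly
the value solving the second.
-/

open Polynomial

section OrderConditions

variable {R : Type*} [CommRing R]

theorem coeff_one_sub_C_mul_X_mul_succ (a : R) (p : R[X]) (k : ℕ) :
    ((1 - C a * X) * p).coeff (k + 1) = p.coeff (k + 1) - a * p.coeff k := by
  simp only [sub_mul, one_mul, mul_assoc, coeff_sub, coeff_C_mul, coeff_X_mul]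

theorem X_pow_three_dvd_of_order_conditions (a b : R) (m : ℕ) (hab : a + b = m)
    (ha : a * m = m.choose 2) :
    X ^ 3 ∣ (1 - C a * X) * (1 + X) ^ m - (1 + C b * X) := by
  refine X_pow_dvd_iff.mpr fun d hd => ?_
  interval_cases d
  · simp [coeff_one_add_X_pow]
  · simp only [coeff_sub, coeff_one_sub_C_mul_X_mul_succ, coeff_one_add_X_pow, coeff_add,
      coeff_C_mul_X, coeff_one]
    norm_num
    linear_combination -hab
  · simp only [coeff_sub, coeff_one_sub_C_mul_X_mul_succ, coeff_one_add_X_pow, coeff_add,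
      coeff_C_mul_X, coeff_one]
    norm_num
    linear_combination -ha

end OrderConditions

theorem theta_method_second_order_polynomial_general (m : ℕ) :
    let θ : ℝ := ((m : ℝ) + 1) / (2 * m)
    let p : ℝ[X] := (1 - C ((1 - θ) * m) * X) * (1 + X) ^ m - (1 + C (θ * m) * X)
    (p.coeff 0 = 0 ∧ p.coeff 1 = 0 ∧ p.coeff 2 = 0) ∧ X ^ 3 ∣ p := by
  intro θ p
  have hθ : (1 - θ) * m * m = (m.choose 2 : ℝ) := by
    rw [Nat.cast_choose_two]
    rcases eq_or_ne (m : ℝ) 0 with hm | hm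
    · simp [hm]
    · simp only [θ]
      field_simp
      ring
  have hdvd : X ^ 3 ∣ p := X_pow_three_dvd_of_order_conditions _ _ m (by ring) hθ
  have hcoeff := X_pow_dvd_iff.mp hdvd
  exact ⟨⟨hcoeff 0 (by norm_num), hcoeff 1 (by norm_num), hcoeff 2 (by norm_num)⟩, hdvd⟩

open Polynomial in
/-- For `θ = (m+1)/(2m)`, the polynomial `(1 − (1−θ)mz)(1+z)^m − (1 + θmz)` has
vanishing coefficients in degrees `0`, `1`, `2`; equivalently it is divisible by
`z³` in `ℝ[z]`. Hence the θ-method with this `θ` approximates `m` steps of forward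
Euler to second order. -/
theorem theta_method_second_order_polynomial (m : ℕ) (hm : 1 ≤ m) :
    let θ : ℝ := ((m : ℝ) + 1) / (2 * m)
    let p : ℝ[X] := (1 - C ((1 - θ) * m) * X) * (1 + X) ^ m - (1 + C (θ * m) * X)
    (p.coeff 0 = 0 ∧ p.coeff 1 = 0 ∧ p.coeff 2 = 0) ∧ X ^ 3 ∣ p :=
  theta_method_second_order_polynomial_general m
end

section
/- (Δ-corrected MGRIT with trivial coarse propagator is Newton's method.) Let A : ℝ^N → ℝ^N be differentiable at v ∈ ℝ^N with invertible Fréchet derivative DA(v), and let g ∈ ℝ^N. Take the approximate coarse operator to be the identity A_c = I, so that the τ-correction at v is τ(v) = v − A(v) and the Δ-correction at v is Δ(v) = DA(v) − I. If w ∈ ℝ^N satisfies the modified FAS coarse-grid equation [A_c + Δ(v)](w) = g + τ(v) + Δ(v)v, i.e. DA(v)·w = g + v − A(v) + (DA(v) − I)v, then w = v − [DA(v)]^{-1}(A(v) − g); that is, the Δ-corrected iteration coincides with one step of Newton's method applied to the residual equation A(v) = g. -/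
/-- Δ-corrected MGRIT with trivial coarse propagator (`A_c = I`) is Newton's method:
if `DA(v)` is invertible (realized by the continuous linear equivalence `A'`), and `w`
solves the modified FAS coarse-grid equation
`DA(v)·w = g + v − A(v) + (DA(v) − I)v`, then `w = v − [DA(v)]⁻¹(A(v) − g)`. -/
theorem delta_correction_identity_coarse_is_newton
    {N : ℕ} (A : EuclideanSpace ℝ (Fin N) → EuclideanSpace ℝ (Fin N))
    (v : EuclideanSpace ℝ (Fin N))
    (hA : DifferentiableAt ℝ A v)
    (A' : EuclideanSpace ℝ (Fin N) ≃L[ℝ] EuclideanSpace ℝ (Fin N))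
    (hA' : (A' : EuclideanSpace ℝ (Fin N) →L[ℝ] EuclideanSpace ℝ (Fin N)) = fderiv ℝ A v)
    (g w : EuclideanSpace ℝ (Fin N))
    (hw : fderiv ℝ A v w = g + v - A v + (fderiv ℝ A v v - v)) :
    w = v - A'.symm (A v - g) := by
  rw [← hA'] at hw
  have h1 : (A' : EuclideanSpace ℝ (Fin N) →L[ℝ] EuclideanSpace ℝ (Fin N)) w
      = A' (v - A'.symm (A v - g)) := by
    rw [map_sub, A'.apply_symm_apply]
    rw [hw]
    abel
  have := congrArg A'.symm h1
  simpa using this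
end
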